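/- arXiv:1204.2730 — 10 statements merged into one kernel-verified Lean document; each statement's English description precedes it below -/
import Mathlib

section
/- Let k, ℓ, D be integers with 2 ≤ k ≤ ℓ ≤ D, D ≥ 3, and (k, ℓ) ≠ (2, 2). If ⌊D/k⌋ + ⌊D/ℓ⌋ ≥ D − 2, then one of the following holds: (k, ℓ) = (2, 3) and D ≤ 12; (k, ℓ) = (2, 4) and D ≤ 8; (k, ℓ) = (2, 5) and D ≤ 6; (k, ℓ) = (2, 6) and D ≤ 6; (k, ℓ) = (3, 3) and D ≤ 6; (k, ℓ) = (3, 4) and D ≤ 4; (k, ℓ) = (4, 4) and D ≤ 4. -/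
/-!
Since `⌊D/k⌋ k ≤ D`, multiplying the hypothesis by `k ℓ` gives `(k ℓ - k - ℓ) D ≤ 2 k ℓ`, that is
`2/D + 1/k + 1/ℓ ≥ 1`. Together with `ℓ ≤ D` this leaves finitely many pairs `(k, ℓ)`, and for each
of them the same inequality bounds `D`.
-/

theorem mul_le_of_sub_two_le_ediv_add_ediv {k l D : ℤ} (hk : 0 < k) (hl : 0 < l)
    (h : D - 2 ≤ D / k + D / l) : (k * l - k - l) * D ≤ 2 * k * l := by
  have hDk : D / k * k ≤ D := Int.ediv_mul_le D hk.ne'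
  have hDl : D / l * l ≤ D := Int.ediv_mul_le D hl.ne'
  have : k * l * (D - 2) ≤ l * D + k * D :=
    calc k * l * (D - 2) ≤ k * l * (D / k + D / l) := by gcongr
      _ = l * (D / k * k) + k * (D / l * l) := by ring
      _ ≤ l * D + k * D := by gcongr
  linarith

theorem le_four_and_le_six_of_mul_le {k l D : ℤ} (hk : 2 ≤ k) (hkl : k ≤ l) (hlD : l ≤ D)
    (h : (k * l - k - l) * D ≤ 2 * k * l) : k ≤ 4 ∧ l ≤ 6 := by
  have hcoef : 0 ≤ k * l - k - l := by nlinarith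
  have hcancel : k * l - k - l ≤ 2 * k := by
    have : (k * l - k - l) * l ≤ 2 * k * l :=
      (mul_le_mul_of_nonneg_left hlD hcoef).trans h
    nlinarith
  constructor <;> nlinarith

-- Integer division by a positive divisor is the floor of the rational quotient.
theorem restricted_pairs_and_degree_bounds_general (k l D : ℤ) (hk : 2 ≤ k) (hkl : k ≤ l)
    (hlD : l ≤ D) (hne : ¬(k = 2 ∧ l = 2))
    (h : D / k + D / l ≥ D - 2) :
    (k = 2 ∧ l = 3 ∧ D ≤ 12) ∨
    (k = 2 ∧ l = 4 ∧ D ≤ 8) ∨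
    (k = 2 ∧ l = 5 ∧ D ≤ 6) ∨
    (k = 2 ∧ l = 6 ∧ D ≤ 6) ∨
    (k = 3 ∧ l = 3 ∧ D ≤ 6) ∨
    (k = 3 ∧ l = 4 ∧ D ≤ 4) ∨
    (k = 4 ∧ l = 4 ∧ D ≤ 4) := by
  have hweak := mul_le_of_sub_two_le_ediv_add_ediv (by omega) (by omega) h
  obtain ⟨hk4, hl6⟩ := le_four_and_le_six_of_mul_le hk hkl hlD hweak
  interval_cases k <;> interval_cases l <;> omega

/-- Step-1 Diophantine analysis (case m = 2): for integers `2 ≤ k ≤ ℓ ≤ D`, `D ≥ 3`,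
`(k, ℓ) ≠ (2, 2)`, if `⌊D/k⌋ + ⌊D/ℓ⌋ ≥ D - 2` then `(k, ℓ)` and the bound on `D`
are among the seven listed possibilities.  Since `k, ℓ, D > 0`, integer division
on `ℤ` is the floor of the rational quotient. -/
theorem restricted_pairs_and_degree_bounds (k l D : ℤ) (hk : 2 ≤ k) (hkl : k ≤ l)
    (hlD : l ≤ D) (hD : 3 ≤ D) (hne : ¬(k = 2 ∧ l = 2))
    (h : D / k + D / l ≥ D - 2) :
    (k = 2 ∧ l = 3 ∧ D ≤ 12) ∨
    (k = 2 ∧ l = 4 ∧ D ≤ 8) ∨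
    (k = 2 ∧ l = 5 ∧ D ≤ 6) ∨
    (k = 2 ∧ l = 6 ∧ D ≤ 6) ∨
    (k = 3 ∧ l = 3 ∧ D ≤ 6) ∨
    (k = 3 ∧ l = 4 ∧ D ≤ 4) ∨
    (k = 4 ∧ l = 4 ∧ D ≤ 4) :=
  restricted_pairs_and_degree_bounds_general k l D hk hkl hlD hne h
end

section
/- Let p, q ∈ ℂ[X] be coprime polynomials with deg p = D ≥ 1 and deg q < D, so that φ = p/q defines a rational map of degree D of the Riemann sphere with φ(∞) = ∞. If every complex root of the Wronskian p′q − pq′ is a root of the product p·(p − q)·q, then R(p) + R(p − q) + R(q) + 1 = D + 2. -/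
open Polynomial

/-- The number of distinct complex roots of a polynomial. -/
noncomputable def numDistinctRoots (f : ℂ[X]) : ℕ := f.roots.toFinset.card

/-!
Put `a = q`, `b = p - q`, `c = -p`. Then `a + b + c = 0`, the three polynomials are pairwise
coprime, and they all have the same Wronskian `W(a, b) = W(b, c) = W(c, a) = p′q − pq′`. At a root
of multiplicity `m` of one of them the other two do not vanish, so `W` vanishes there to order
exactly `m - 1`. If every root of `W` is a root of `abc`, summing over the set `S` of distinct
roots of `abc` gives `deg (abc) = deg W + #S`, that is `2D + e = (D + e - 1) + #S` with
`e = deg q`; hence `#S = D + 1`.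
-/

theorem IsCoprime.of_sum_zero {R : Type*} [CommRing R] {a b c : R} (hsum : a + b + c = 0)
    (hab : IsCoprime a b) : IsCoprime b c := by
  rw [show c = -(a + b * 1) by linear_combination hsum]
  exact (hab.symm.add_mul_left_right 1).neg_right

namespace Polynomial

section CommRing

variable {R : Type*} [CommRing R]

theorem wronskian_eq_of_sum_zero' {a b c : R[X]} (hsum : a + b + c = 0) :
    wronskian a b = wronskian c a :=
  (wronskian_eq_of_sum_zero hsum).trans (wronskian_eq_of_sum_zero (by linear_combination hsum))

theorem rootMultiplicity_sub_of_pow_dvd {f g : R[X]} {z : R} (hf : f ≠ 0)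
    (hg : (X - C z) ^ (rootMultiplicity z f + 1) ∣ g) :
    rootMultiplicity z (f - g) = rootMultiplicity z f := by
  have hfg : f - g ≠ 0 := by
    intro h
    obtain rfl := sub_eq_zero.mp h
    exact pow_rootMultiplicity_not_dvd hf z hg
  apply le_antisymm
  · rw [rootMultiplicity_le_iff hfg]
    exact fun h => pow_rootMultiplicity_not_dvd hf z (by simpa using dvd_add h hg)
  · rw [le_rootMultiplicity_iff hfg]
    exact dvd_sub (pow_rootMultiplicity_dvd f z) ((pow_dvd_pow _ (Nat.le_succ _)).trans hg)

variable [IsDomain R]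

theorem not_isRoot_of_isCoprime {f g : R[X]} {z : R} (h : IsCoprime f g) (hf : f.IsRoot z) :
    ¬ g.IsRoot z := by
  simpa [hf.eq_zero] using aeval_ne_zero_of_isCoprime h z

theorem card_roots_toFinset_mul_of_isCoprime [DecidableEq R] {f g : R[X]} (h : IsCoprime f g)
    (hfg : f * g ≠ 0) :
    (f * g).roots.toFinset.card = f.roots.toFinset.card + g.roots.toFinset.card := by
  rw [roots_mul hfg, Multiset.toFinset_add, Finset.card_union_of_disjoint]
  rw [Finset.disjoint_left]
  intro z hzf hzg
  simp only [Multiset.mem_toFinset, mem_roots'] at hzf hzg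
  exact not_isRoot_of_isCoprime h hzf.2 hzg.2

variable [CharZero R]

theorem rootMultiplicity_wronskian_of_isRoot {f g : R[X]} {z : R} (hf : f.IsRoot z)
    (hg : ¬ g.IsRoot z) :
    rootMultiplicity z (wronskian g f) = rootMultiplicity z f - 1 := by
  rcases eq_or_ne f 0 with rfl | hf0
  · simp
  have hm : 1 ≤ rootMultiplicity z f := (rootMultiplicity_pos hf0).mpr hf
  have hf' : derivative f ≠ 0 := by
    rw [Ne, derivative_eq_zero, ← Ne, ← pos_iff_ne_zero, natDegree_pos_iff_degree_pos]
    exact degree_pos_of_root hf0 hf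
  have hg0 : g ≠ 0 := by rintro rfl; exact hg (by simp)
  have hmul : rootMultiplicity z (g * derivative f) = rootMultiplicity z f - 1 := by
    rw [rootMultiplicity_mul (mul_ne_zero hg0 hf'), rootMultiplicity_eq_zero hg,
      derivative_rootMultiplicity_of_root hf, zero_add]
  rw [wronskian, rootMultiplicity_sub_of_pow_dvd (mul_ne_zero hg0 hf'), hmul]
  rw [hmul, Nat.sub_add_cancel hm]
  exact dvd_mul_of_dvd_right (pow_rootMultiplicity_dvd f z) _

theorem natDegree_wronskian_of_natDegree_lt {a b : R[X]} (ha : a ≠ 0)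
    (h : a.natDegree < b.natDegree) :
    (wronskian a b).natDegree = a.natDegree + b.natDegree - 1 := by
  have hb : b ≠ 0 := by rintro rfl; simp at h
  have hb' : derivative b ≠ 0 := derivative_ne_zero.mpr (by omega)
  have hdeg : (a * derivative b).natDegree = a.natDegree + b.natDegree - 1 := by
    rw [natDegree_mul ha hb', natDegree_derivative]
    omega
  rcases Nat.eq_zero_or_pos a.natDegree with ha0 | ha0
  · rwa [wronskian, derivative_eq_zero.mpr ha0, zero_mul, sub_zero]
  have ha' : derivative a ≠ 0 := derivative_ne_zero.mpr (by omega)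
  have hdeg' : (derivative a * b).natDegree = a.natDegree + b.natDegree - 1 := by
    rw [natDegree_mul ha' hb, natDegree_derivative]
    omega
  have hcoeff : (wronskian a b).coeff (a.natDegree + b.natDegree - 1) ≠ 0 := by
    rw [wronskian, coeff_sub, ← hdeg, ← leadingCoeff, hdeg, ← hdeg', ← leadingCoeff]
    simp only [leadingCoeff_mul, leadingCoeff_derivative]
    rw [show a.leadingCoeff * (b.leadingCoeff * b.natDegree) - a.leadingCoeff * a.natDegree *
        b.leadingCoeff = a.leadingCoeff * b.leadingCoeff * (b.natDegree - a.natDegree) by ring]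
    exact mul_ne_zero (mul_ne_zero (leadingCoeff_ne_zero.mpr ha) (leadingCoeff_ne_zero.mpr hb))
      (sub_ne_zero.mpr (by exact_mod_cast h.ne'))
  have hW : wronskian a b ≠ 0 := fun hW => hcoeff (by rw [hW, coeff_zero])
  exact le_antisymm (Nat.le_sub_one_of_lt (natDegree_wronskian_lt_add hW))
    (le_natDegree_of_ne_zero hcoeff)

theorem rootMultiplicity_wronskian_of_sum_zero {a b c : R[X]} {z : R}
    (hsum : a + b + c = 0) (hab : IsCoprime a b) (ha : a.IsRoot z) :
    rootMultiplicity z (wronskian a b) = rootMultiplicity z a - 1 := by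
  rw [wronskian_eq_of_sum_zero' hsum]
  refine rootMultiplicity_wronskian_of_isRoot ha fun hc => not_isRoot_of_isCoprime hab ha ?_
  simpa [ha.eq_zero, hc.eq_zero] using congrArg (eval z) hsum

theorem rootMultiplicity_mul_mul_of_sum_zero {a b c : R[X]} {z : R}
    (hsum : a + b + c = 0) (hab : IsCoprime a b) (habc : a * b * c ≠ 0)
    (hz : (a * b * c).IsRoot z) :
    rootMultiplicity z (a * b * c) = rootMultiplicity z (wronskian a b) + 1 := by
  have hsum_bca : b + c + a = 0 := by linear_combination hsum
  have hsum_cab : c + a + b = 0 := by linear_combination hsum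
  have hbc := hab.of_sum_zero hsum
  have hca := hbc.of_sum_zero hsum_bca
  have hab0 := left_ne_zero_of_mul habc
  rw [rootMultiplicity_mul habc, rootMultiplicity_mul hab0]
  rcases root_mul.mp hz with hz | hc
  · rcases root_mul.mp hz with ha | hb
    · have := (rootMultiplicity_pos (left_ne_zero_of_mul hab0)).mpr ha
      rw [rootMultiplicity_wronskian_of_sum_zero hsum hab ha,
        rootMultiplicity_eq_zero (not_isRoot_of_isCoprime hab ha),
        rootMultiplicity_eq_zero (not_isRoot_of_isCoprime hca.symm ha)]
      omega
    · have := (rootMultiplicity_pos (right_ne_zero_of_mul hab0)).mpr hb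
      rw [wronskian_eq_of_sum_zero hsum, rootMultiplicity_wronskian_of_sum_zero hsum_bca hbc hb,
        rootMultiplicity_eq_zero (not_isRoot_of_isCoprime hab.symm hb),
        rootMultiplicity_eq_zero (not_isRoot_of_isCoprime hbc hb)]
      omega
  · have := (rootMultiplicity_pos (right_ne_zero_of_mul habc)).mpr hc
    rw [wronskian_eq_of_sum_zero' hsum, rootMultiplicity_wronskian_of_sum_zero hsum_cab hca hc,
      rootMultiplicity_eq_zero (not_isRoot_of_isCoprime hca hc),
      rootMultiplicity_eq_zero (not_isRoot_of_isCoprime hbc.symm hc)]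
    omega

end CommRing

section IsAlgClosed

variable {K : Type*} [Field K] [IsAlgClosed K] [DecidableEq K]

theorem natDegree_eq_natDegree_add_card_roots_toFinset {f g : K[X]} (hf : f ≠ 0)
    (hroots : ∀ z, g.IsRoot z → f.IsRoot z)
    (hmult : ∀ z, f.IsRoot z → rootMultiplicity z f = rootMultiplicity z g + 1) :
    f.natDegree = g.natDegree + f.roots.toFinset.card := by
  have hroots_eq : f.roots = g.roots + f.roots.dedup := by
    ext z
    by_cases hz : f.IsRoot z
    · simp [mem_roots hf, hz.eq_zero, hmult z hz]
    · have hz' : eval z f ≠ 0 := hz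
      simp [mem_roots hf, hz', rootMultiplicity_eq_zero (mt (hroots z) hz)]
  rw [← IsAlgClosed.card_roots_eq_natDegree, ← IsAlgClosed.card_roots_eq_natDegree,
    Multiset.card_toFinset, ← Multiset.card_add, ← hroots_eq]

theorem natDegree_mul_mul_of_sum_zero [CharZero K] {a b c : K[X]} (hsum : a + b + c = 0)
    (hab : IsCoprime a b) (habc : a * b * c ≠ 0)
    (hroots : ∀ z, (wronskian a b).IsRoot z → (a * b * c).IsRoot z) :
    (a * b * c).natDegree = (wronskian a b).natDegree + (a * b * c).roots.toFinset.card :=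
  natDegree_eq_natDegree_add_card_roots_toFinset habc hroots
    fun _ hz => rootMultiplicity_mul_mul_of_sum_zero hsum hab habc hz

end IsAlgClosed

end Polynomial

theorem belyi_fiber_count_general (p q : ℂ[X]) (D : ℕ)
    (hp : p.natDegree = D) (hq : q.natDegree < D) (hcop : IsCoprime p q)
    (hbr : ∀ z : ℂ, (derivative p * q - p * derivative q).IsRoot z →
      (p * (p - q) * q).IsRoot z) :
    numDistinctRoots p + numDistinctRoots (p - q) + numDistinctRoots q + 1 = D + 2 := by
  have hq0 : q ≠ 0 := by
    rintro rfl
    have := natDegree_eq_zero_of_isUnit (isCoprime_zero_right.mp hcop)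
    omega
  have hp0 : p ≠ 0 := by rintro rfl; simp at hp; omega
  have hpq : (p - q).natDegree = D := by rw [natDegree_sub_eq_left_of_natDegree_lt (by omega), hp]
  have hpq0 : p - q ≠ 0 := by rintro h; simp [h] at hpq; omega
  have hP0 : p * (p - q) * q ≠ 0 := mul_ne_zero (mul_ne_zero hp0 hpq0) hq0
  have hsum : q + (p - q) + -p = 0 := by ring
  have hP : q * (p - q) * -p = -(p * (p - q) * q) := by ring
  have hW : wronskian q (p - q) = derivative p * q - p * derivative q := by
    rw [wronskian, derivative_sub]; ring
  have hcop_q : IsCoprime q (p - q) := hcop.neg_left.of_sum_zero (by linear_combination hsum)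
  have hcop_p : IsCoprime p (p - q) :=
    ((IsCoprime.neg_right_iff _ _).mp (hcop_q.of_sum_zero hsum)).symm
  have hcount := natDegree_mul_mul_of_sum_zero hsum hcop_q (by rw [hP]; exact neg_ne_zero.mpr hP0)
    fun z hz => by rw [hP, IsRoot, eval_neg, neg_eq_zero]; exact hbr z (hW ▸ hz)
  rw [hP, natDegree_neg, roots_neg, card_roots_toFinset_mul_of_isCoprime
      (hcop.mul_left hcop_q.symm) hP0, card_roots_toFinset_mul_of_isCoprime hcop_p
      (mul_ne_zero hp0 hpq0), natDegree_mul (mul_ne_zero hp0 hpq0) hq0, natDegree_mul hp0 hpq0,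
    natDegree_wronskian_of_natDegree_lt hq0 (by omega)] at hcount
  unfold numDistinctRoots
  omega

/-- Lemma 2.2(a), first half: if the rational map `φ = p/q` (of degree `D`, with
`φ(∞) = ∞`) has all its (finite) branch points — i.e. the roots of the Wronskian
`p′q − pq′` — above `{0, 1, ∞}`, then there are exactly `D + 2` distinct points
above `{0, 1, ∞}`, namely the roots of `p`, of `p − q`, of `q`, and the point `∞`. -/
theorem belyi_fiber_count (p q : ℂ[X]) (D : ℕ) (hD : 1 ≤ D)
    (hp : p.natDegree = D) (hq : q.natDegree < D) (hcop : IsCoprime p q)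
    (hbr : ∀ z : ℂ, (derivative p * q - p * derivative q).IsRoot z →
      (p * (p - q) * q).IsRoot z) :
    numDistinctRoots p + numDistinctRoots (p - q) + numDistinctRoots q + 1 = D + 2 :=
  belyi_fiber_count_general p q D hp hq hcop hbr
end

section
/- Let p, q ∈ ℂ[X] be coprime polynomials with deg p = D ≥ 1 and deg q < D, so that φ = p/q defines a rational map of degree D of the Riemann sphere with φ(∞) = ∞. If some complex root of the Wronskian p′q − pq′ is not a root of the product p·(p − q)·q, then R(p) + R(p − q) + R(q) + 1 ≥ D + 3. -/
/-!
For the Wronskian `W = p q' − p' q` of coprime `p, q` one has `deg W < deg p + deg q`, and, as in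
the Mason–Stothers theorem, every root of `p`, `p − q` or `q` of multiplicity `m` is a root of `W`
of multiplicity at least `m − 1`, i.e. `divRadical (p (p − q) q) ∣ W`. A root `z` of `W` off the
three fibres contributes a further coprime factor `X − z`, whence
`2D + deg q − (R(p) + R(p − q) + R(q)) + 1 ≤ deg W < D + deg q`.
-/

open Polynomial

open UniqueFactorizationMonoid EuclideanDomain

section Coprime

variable {R : Type*} [CommRing R] {x y : R}

theorem IsCoprime.self_sub_right (h : IsCoprime x y) : IsCoprime x (x - y) := by
  simpa only [mul_one] using (IsCoprime.mul_sub_left_right_iff (z := 1)).mpr h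

theorem IsCoprime.sub_left (h : IsCoprime x y) : IsCoprime (x - y) y := by
  simpa only [mul_one] using (IsCoprime.sub_mul_left_left_iff (z := 1)).mpr h

end Coprime

namespace Polynomial

section CommRing

variable {R : Type*} [CommRing R]

theorem wronskian_sub_self_left (p q : R[X]) : wronskian (p - q) q = wronskian p q := by
  simp only [wronskian, derivative_sub]
  ring

theorem wronskian_eq_neg_derivative_mul_sub (p q : R[X]) :
    wronskian p q = -(derivative p * q - p * derivative q) := by
  rw [wronskian]
  ring

end CommRing

section Field

variable {k : Type*} [Field k]

theorem wronskian_ne_zero_of_natDegree_pos [CharZero k] {p q : k[X]} (hpq : IsCoprime p q)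
    (hp : 0 < p.natDegree) : wronskian p q ≠ 0 := fun hw =>
  hp.ne' (derivative_eq_zero.mp (hpq.wronskian_eq_zero_iff.mp hw).1)

variable [DecidableEq k]

theorem roots_radical_toFinset {f : k[X]} (hf : f ≠ 0) :
    (radical f).roots.toFinset = f.roots.toFinset := by
  ext z
  simp only [Multiset.mem_toFinset, mem_roots radical_ne_zero, mem_roots hf, ← dvd_iff_isRoot]
  exact dvd_radical_iff (prime_X_sub_C z).isRadical hf

theorem natDegree_radical_eq_card_roots_toFinset [IsAlgClosed k] {f : k[X]} (hf : f ≠ 0) :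
    (radical f).natDegree = f.roots.toFinset.card := by
  have hsep : (radical f).Separable := PerfectField.separable_iff_squarefree.mpr squarefree_radical
  rw [← roots_radical_toFinset hf, Multiset.toFinset_card_of_nodup (nodup_roots hsep),
    (IsAlgClosed.splits _).natDegree_eq_card_roots]

theorem divRadical_mul_sub_mul_dvd_wronskian {p q : k[X]} (hpq : IsCoprime p q) :
    divRadical (p * (p - q) * q) ∣ wronskian p q := by
  have hp_dvd := divRadical_dvd_wronskian_left p q
  have hq_dvd := divRadical_dvd_wronskian_right p q
  have hpq_dvd := divRadical_dvd_wronskian_left (p - q) q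
  rw [wronskian_sub_self_left] at hpq_dvd
  rw [divRadical_mul (hpq.mul_left hpq.sub_left), divRadical_mul hpq.self_sub_right]
  exact (hpq.divRadical.mul_left hpq.sub_left.divRadical).mul_dvd
    (hpq.self_sub_right.divRadical.mul_dvd hp_dvd hpq_dvd) hq_dvd

theorem X_sub_C_mul_divRadical_dvd_wronskian {p q : k[X]} (hpq : IsCoprime p q) {z : k}
    (hz : (wronskian p q).IsRoot z) (hz' : ¬ (p * (p - q) * q).IsRoot z) :
    (X - C z) * divRadical (p * (p - q) * q) ∣ wronskian p q := by
  have hcop : IsCoprime (X - C z) (divRadical (p * (p - q) * q)) := by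
    rw [(prime_X_sub_C z).irreducible.coprime_iff_not_dvd, dvd_iff_isRoot]
    exact fun h => hz' (dvd_iff_isRoot.mp ((dvd_iff_isRoot.mpr h).trans (divRadical_dvd_self _)))
  exact hcop.mul_dvd (dvd_iff_isRoot.mpr hz) (divRadical_mul_sub_mul_dvd_wronskian hpq)

theorem natDegree_add_one_lt_of_isRoot_wronskian {p q : k[X]} (hpq : IsCoprime p q)
    (hw : wronskian p q ≠ 0) {z : k} (hz : (wronskian p q).IsRoot z)
    (hz' : ¬ (p * (p - q) * q).IsRoot z) :
    (p * (p - q) * q).natDegree + 1 <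
      (radical (p * (p - q) * q)).natDegree + p.natDegree + q.natDegree := by
  set f := p * (p - q) * q
  have hf : f ≠ 0 := fun hf => hz' (by rw [hf, IsRoot, eval_zero])
  have hsplit : f.natDegree = (divRadical f).natDegree + (radical f).natDegree := by
    rw [← natDegree_mul (divRadical_ne_zero hf) radical_ne_zero, divRadical_mul_radical]
  have hdvd : ((X - C z) * divRadical f).natDegree ≤ (wronskian p q).natDegree :=
    natDegree_le_of_dvd (X_sub_C_mul_divRadical_dvd_wronskian hpq hz hz') hw
  rw [natDegree_mul (X_sub_C_ne_zero z) (divRadical_ne_zero hf), natDegree_X_sub_C] at hdvd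
  have hlt := natDegree_wronskian_lt_add hw
  omega

end Field

end Polynomial

theorem numDistinctRoots_eq_natDegree_radical {f : ℂ[X]} (hf : f ≠ 0) :
    numDistinctRoots f = (radical f).natDegree :=
  (natDegree_radical_eq_card_roots_toFinset hf).symm

theorem numDistinctRoots_mul {f g : ℂ[X]} (hf : f ≠ 0) (hg : g ≠ 0) (hfg : IsCoprime f g) :
    numDistinctRoots (f * g) = numDistinctRoots f + numDistinctRoots g := by
  rw [numDistinctRoots_eq_natDegree_radical (mul_ne_zero hf hg), radical_mul hfg.isRelPrime,
    natDegree_mul radical_ne_zero radical_ne_zero, numDistinctRoots_eq_natDegree_radical hf,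
    numDistinctRoots_eq_natDegree_radical hg]

theorem non_belyi_fiber_count_general (p q : ℂ[X]) (D : ℕ)
    (hp : p.natDegree = D) (hq : q.natDegree < D) (hcop : IsCoprime p q)
    (hbr : ∃ z : ℂ, (derivative p * q - p * derivative q).IsRoot z ∧
      ¬ (p * (p - q) * q).IsRoot z) :
    numDistinctRoots p + numDistinctRoots (p - q) + numDistinctRoots q + 1 ≥ D + 3 := by
  obtain ⟨z, hz, hz'⟩ := hbr
  have hzw : (wronskian p q).IsRoot z := by
    rw [IsRoot, wronskian_eq_neg_derivative_mul_sub, eval_neg, hz.eq_zero, neg_zero]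
  have hf : p * (p - q) * q ≠ 0 := fun hf => hz' (by rw [hf, IsRoot, eval_zero])
  obtain ⟨⟨hp0, hpq0⟩, hq0⟩ := mul_ne_zero_iff.mp hf |>.imp_left mul_ne_zero_iff.mp
  have hpq : (p - q).natDegree = D := by
    rw [natDegree_sub_eq_left_of_natDegree_lt (hp ▸ hq), hp]
  have hw := wronskian_ne_zero_of_natDegree_pos hcop (by omega)
  have key := natDegree_add_one_lt_of_isRoot_wronskian hcop hw hzw hz'
  rw [← numDistinctRoots_eq_natDegree_radical hf,
    numDistinctRoots_mul (mul_ne_zero hp0 hpq0) hq0 (hcop.mul_left hcop.sub_left),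
    numDistinctRoots_mul hp0 hpq0 hcop.self_sub_right, natDegree_mul (mul_ne_zero hp0 hpq0) hq0,
    natDegree_mul hp0 hpq0, hpq, hp] at key
  omega

/-- Lemma 2.2(a), second half: if the rational map `φ = p/q` (of degree `D`, with
`φ(∞) = ∞`) has a finite branch point — a root of the Wronskian `p′q − pq′` —
outside the fibers above `{0, 1, ∞}`, then there are at least `D + 3` distinct
points above `{0, 1, ∞}`. -/
theorem non_belyi_fiber_count (p q : ℂ[X]) (D : ℕ) (hD : 1 ≤ D)
    (hp : p.natDegree = D) (hq : q.natDegree < D) (hcop : IsCoprime p q)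
    (hbr : ∃ z : ℂ, (derivative p * q - p * derivative q).IsRoot z ∧
      ¬ (p * (p - q) * q).IsRoot z) :
    numDistinctRoots p + numDistinctRoots (p - q) + numDistinctRoots q + 1 ≥ D + 3 :=
  non_belyi_fiber_count_general p q D hp hq hcop hbr
end

section
/- In ℂ[X] the identity 64X(X − 1)³ − (8X − 9) = (8X² − 12X + 3)² holds; moreover the polynomials X(X − 1), 8X² − 12X + 3, and 8X − 9 are each squarefree and pairwise coprime. (This certifies that φ(x) = 64x(x−1)³/(8x−9) is a Belyi covering of degree 4 with branching pattern 3+1 above 0, 2+2 above 1, and 3+1 above ∞ — the covering H₄₇.) -/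
/-!
Squarefreeness and coprimality are both certified by Bézout identities `u·p + v·q = c` with `c` a
nonzero constant. For squarefreeness take `q = p'`: for `p = aX² + bX + c` one has
`p'² - 4a·p = b² - 4ac`, so a nonzero discriminant makes `p` separable, hence squarefree.
-/

open Polynomial

namespace Polynomial

variable {K : Type*} [Field K]

theorem isCoprime_of_mul_add_mul_eq_C {p q u v : K[X]} {c : K} (hc : c ≠ 0)
    (h : u * p + v * q = C c) : IsCoprime p q :=
  ⟨C c⁻¹ * u, C c⁻¹ * v, by
    rw [mul_assoc, mul_assoc, ← mul_add, h, ← C_mul, inv_mul_cancel₀ hc, C_1]⟩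

theorem squarefree_of_mul_add_mul_derivative_eq_C {p u v : K[X]} {c : K} (hc : c ≠ 0)
    (h : u * p + v * derivative p = C c) : Squarefree p :=
  Separable.squarefree (isCoprime_of_mul_add_mul_eq_C hc h)

end Polynomial

theorem IsCoprime.not_isRoot_and_isRoot {R : Type*} [CommRing R] [Nontrivial R] {p q : R[X]}
    (h : IsCoprime p q) (z : R) : ¬(p.IsRoot z ∧ q.IsRoot z) := by
  rintro ⟨hp, hq⟩
  rcases aeval_ne_zero_of_isCoprime h z with hp' | hq'
  · exact hp' (by simpa using hp)
  · exact hq' (by simpa using hq)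

/-- Certificate for the covering `H₄₇`:
`64X(X − 1)³ − (8X − 9) = (8X² − 12X + 3)²` in `ℂ[X]`, and the polynomials
`X(X − 1)`, `8X² − 12X + 3`, `8X − 9` are squarefree and pairwise have no
common complex root.  Hence `φ(x) = 64x(x−1)³/(8x−9)` is a Belyi covering of
degree 4 with branching pattern `3+1 = 2+2 = 3+1`. -/
theorem H47_certificate :
    (64 : ℂ[X]) * X * (X - 1) ^ 3 - (8 * X - 9) = (8 * X ^ 2 - 12 * X + 3) ^ 2 ∧
    Squarefree ((X : ℂ[X]) * (X - 1)) ∧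
    Squarefree ((8 : ℂ[X]) * X ^ 2 - 12 * X + 3) ∧
    Squarefree ((8 : ℂ[X]) * X - 9) ∧
    (∀ z : ℂ, ¬(((X : ℂ[X]) * (X - 1)).IsRoot z ∧
      ((8 : ℂ[X]) * X ^ 2 - 12 * X + 3).IsRoot z)) ∧
    (∀ z : ℂ, ¬(((X : ℂ[X]) * (X - 1)).IsRoot z ∧
      ((8 : ℂ[X]) * X - 9).IsRoot z)) ∧
    (∀ z : ℂ, ¬(((8 : ℂ[X]) * X ^ 2 - 12 * X + 3).IsRoot z ∧
      ((8 : ℂ[X]) * X - 9).IsRoot z)) := by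
  refine ⟨by ring, ?_, ?_, ?_, ?_, ?_, ?_⟩
  · exact squarefree_of_mul_add_mul_derivative_eq_C (u := -4) (v := 2 * X - 1) (c := 1)
      one_ne_zero (by simp; ring)
  · exact squarefree_of_mul_add_mul_derivative_eq_C (u := -32) (v := 16 * X - 12) (c := 48)
      (by norm_num) (by simp [C_ofNat]; ring)
  · exact squarefree_of_mul_add_mul_derivative_eq_C (u := 0) (v := 1) (c := 8)
      (by norm_num) (by simp [C_ofNat])
  · exact (isCoprime_of_mul_add_mul_eq_C (u := 32 * X - 24) (v := 1 - 4 * X) (c := 3)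
      (by norm_num) (by rw [C_ofNat]; ring)).not_isRoot_and_isRoot
  · exact (isCoprime_of_mul_add_mul_eq_C (u := 64) (v := -(8 * X + 1)) (c := 9)
      (by norm_num) (by rw [C_ofNat]; ring)).not_isRoot_and_isRoot
  · exact (isCoprime_of_mul_add_mul_eq_C (u := -8) (v := 8 * X - 3) (c := 3)
      (by norm_num) (by rw [C_ofNat]; ring)).not_isRoot_and_isRoot
end

section
/- There do not exist polynomials F, G, h ∈ ℂ[X] such that: F is squarefree of degree 4; G is squarefree of degree 6; h is squarefree of degree 3; F and h have no common complex root; and F³ = G² + h². (Equivalently, there is no Belyi covering of degree 12 with branching pattern [3]⁴ above 0, [2]⁶ above 1, and 6+2+2+2 above ∞ — the nonexistent pattern N₄ of the paper.) -/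
/-!
With `i² = -1`, `F³ = G² + h² = (G + i h)(G - i h)` with coprime factors (as `F` and `h` are
coprime), so `G + i h = A³` and `G - i h = B³`, whence `2 i h = A³ - B³` and `deg F ≤ deg A + deg B`.
But `deg (A³ - B³) ≥ deg A + deg B` whenever `A³ ≠ B³`: this is clear when the degrees of `A`
and `B` or the cubes `a³, b³` of their leading coefficients differ; otherwise replacing `B` by
`(a / b) B` keeps `B³` and makes the leading coefficients equal, and then the factor
`A² + A B + B²` of `A³ - B³` has top coefficient `3 a² ≠ 0` in degree `2 deg A`.
Hence `deg F ≤ deg h`, which is impossible with `deg F = 4` and `deg h = 3`.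
-/

open Polynomial

theorem IsCoprime.add_mul_sub_mul {R : Type*} [CommRing R] {G h c : R} (hc : IsUnit (2 * c))
    (hGh : IsCoprime G h) : IsCoprime (G + c * h) (G - c * h) := by
  have hsub : G - c * h = (G + c * h) * 1 + -(2 * c) * h := by ring
  rwa [hsub, IsCoprime.mul_add_left_right_iff, isCoprime_mul_unit_left_right hc.neg,
    IsCoprime.add_mul_right_left_iff]

namespace Polynomial

variable {K : Type*} [Field K]

theorem exists_pow_eq_of_mul_eq_pow [IsAlgClosed K] {P Q F : K[X]} (hPQ : IsCoprime P Q) {n : ℕ}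
    (hn : 0 < n) (h : P * Q = F ^ n) : ∃ A, A ^ n = P := by
  obtain ⟨A, u, rfl⟩ := exists_associated_pow_of_mul_eq_pow' hPQ h
  obtain ⟨c, -, hc⟩ := Polynomial.isUnit_iff.mp u.isUnit
  obtain ⟨γ, rfl⟩ := IsAlgClosed.exists_pow_nat_eq c hn
  exact ⟨C γ * A, by rw [← hc, mul_pow, ← C_pow, mul_comm]⟩

theorem two_mul_natDegree_le_natDegree_pow_three_sub_pow_three (h3 : (3 : K) ≠ 0) {A B : K[X]}
    (hdeg : A.natDegree = B.natDegree) (hne : A ^ 3 ≠ B ^ 3) :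
    2 * A.natDegree ≤ (A ^ 3 - B ^ 3).natDegree := by
  set d := A.natDegree
  by_cases hA : A = 0
  · simp [d, hA]
  set a := A.leadingCoeff
  set b := B.leadingCoeff
  have ha : a ≠ 0 := leadingCoeff_ne_zero.mpr hA
  have hBd : B.natDegree ≤ d := hdeg.ge
  by_cases hcube : a ^ 3 = b ^ 3
  · have hb : b ≠ 0 := ne_zero_pow three_ne_zero (hcube ▸ pow_ne_zero 3 ha)
    set B' := C (a / b) * B
    have hB' : B' ^ 3 = B ^ 3 := by
      rw [mul_pow, ← C_pow, div_pow, hcube, div_self (pow_ne_zero 3 hb), C_1, one_mul]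
    have hB'd : B'.natDegree ≤ d := (natDegree_C_mul_le _ _).trans hBd
    have hB'a : B'.coeff d = a := by
      rw [coeff_C_mul, hdeg, ← leadingCoeff, div_mul_cancel₀ _ hb]
    have hquad : (A ^ 2 + A * B' + B' ^ 2).coeff (2 * d) = 3 * a ^ 2 := by
      rw [coeff_add, coeff_add, coeff_pow_of_natDegree_le le_rfl, two_mul,
        coeff_mul_add_eq_of_natDegree_le le_rfl hB'd, ← two_mul, coeff_pow_of_natDegree_le hB'd,
        hB'a]
      simp only [a, coeff_natDegree]; ring
    have hdvd : A ^ 2 + A * B' + B' ^ 2 ∣ A ^ 3 - B ^ 3 := ⟨A - B', by rw [← hB']; ring⟩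
    calc 2 * d ≤ (A ^ 2 + A * B' + B' ^ 2).natDegree :=
          le_natDegree_of_ne_zero (by rw [hquad]; exact mul_ne_zero h3 (pow_ne_zero 2 ha))
      _ ≤ (A ^ 3 - B ^ 3).natDegree := natDegree_le_of_dvd hdvd (sub_ne_zero.mpr hne)
  · have hcoeff : (A ^ 3 - B ^ 3).coeff (3 * d) = a ^ 3 - b ^ 3 := by
      rw [coeff_sub, coeff_pow_of_natDegree_le le_rfl, coeff_pow_of_natDegree_le hBd, hdeg]; rfl
    calc 2 * d ≤ 3 * d := by omega
      _ ≤ (A ^ 3 - B ^ 3).natDegree :=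
          le_natDegree_of_ne_zero (by rw [hcoeff]; exact sub_ne_zero.mpr hcube)

theorem natDegree_add_natDegree_le_natDegree_pow_three_sub_pow_three (h3 : (3 : K) ≠ 0)
    {A B : K[X]} (hne : A ^ 3 ≠ B ^ 3) :
    A.natDegree + B.natDegree ≤ (A ^ 3 - B ^ 3).natDegree := by
  wlog hBA : B.natDegree ≤ A.natDegree generalizing A B
  · rw [← natDegree_neg (A ^ 3 - B ^ 3), neg_sub, add_comm]
    exact this hne.symm (le_of_not_ge hBA)
  rcases hBA.lt_or_eq with hlt | heq
  · rw [natDegree_sub_eq_left_of_natDegree_lt (by simpa [natDegree_pow] using hlt),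
      natDegree_pow]
    omega
  · have := two_mul_natDegree_le_natDegree_pow_three_sub_pow_three h3 heq.symm hne
    omega

theorem natDegree_le_natDegree_of_pow_three_eq_sq_add_sq [IsAlgClosed K] (h2 : (2 : K) ≠ 0)
    (h3 : (3 : K) ≠ 0) {F G h : K[X]} (hFh : IsCoprime F h) (heq : F ^ 3 = G ^ 2 + h ^ 2) :
    F.natDegree ≤ h.natDegree := by
  by_cases hh : h = 0
  · subst hh
    simp [natDegree_eq_zero_of_isUnit (isCoprime_zero_right.mp hFh)]
  obtain ⟨i, hi⟩ := IsAlgClosed.exists_pow_nat_eq (-1 : K) two_pos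
  have h2i : 2 * i ≠ 0 := mul_ne_zero h2 (by rintro rfl; norm_num at hi)
  have hGh : IsCoprime G h := by
    have := hFh.pow_left (m := 3)
    rwa [heq, sq h, IsCoprime.add_mul_left_left_iff, IsCoprime.pow_left_iff two_pos] at this
  have hCi : C i ^ 2 = -1 := by rw [← C_pow, hi, C_neg, C_1]
  have hfactor : (G + C i * h) * (G - C i * h) = F ^ 3 := by
    rw [heq]; linear_combination (-h ^ 2) * hCi
  have hcop : IsCoprime (G + C i * h) (G - C i * h) :=
    hGh.add_mul_sub_mul (by rw [← C_ofNat, ← C_mul]; exact isUnit_C.mpr h2i.isUnit)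
  obtain ⟨A, hA⟩ := exists_pow_eq_of_mul_eq_pow hcop three_pos hfactor
  obtain ⟨B, hB⟩ := exists_pow_eq_of_mul_eq_pow hcop.symm three_pos (by rwa [mul_comm])
  have hdiff : A ^ 3 - B ^ 3 = C (2 * i) * h := by rw [hA, hB, C_mul, C_ofNat]; ring
  have hF : F.natDegree ≤ A.natDegree + B.natDegree := by
    have hcube : F ^ 3 = (A * B) ^ 3 := by rw [mul_pow, hA, hB, hfactor]
    have := congrArg natDegree hcube
    rw [natDegree_pow, natDegree_pow] at this
    have := natDegree_mul_le (p := A) (q := B)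
    omega
  calc F.natDegree ≤ A.natDegree + B.natDegree := hF
    _ ≤ (A ^ 3 - B ^ 3).natDegree :=
      natDegree_add_natDegree_le_natDegree_pow_three_sub_pow_three h3
        (sub_ne_zero.mp (by rw [hdiff]; exact mul_ne_zero (C_ne_zero.mpr h2i) hh))
    _ = h.natDegree := by rw [hdiff, natDegree_C_mul h2i]

end Polynomial

/-- Nonexistent branching pattern `N₄`: there is no Belyi covering of degree 12
with branching pattern `[3]⁴ = [2]⁶ = 6+2+2+2`.  Normalized so that the point of
ramification order 6 is at `∞`, such a covering would be `F³/h²` with `F`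
squarefree of degree 4, `G` squarefree of degree 6, `h` squarefree of degree 3,
`F` and `h` sharing no complex root, and `F³ = G² + h²`. -/
theorem no_covering_N4 :
    ¬ ∃ (F G h : ℂ[X]),
      Squarefree F ∧ F.natDegree = 4 ∧
      Squarefree G ∧ G.natDegree = 6 ∧
      Squarefree h ∧ h.natDegree = 3 ∧
      (∀ z : ℂ, ¬(F.IsRoot z ∧ h.IsRoot z)) ∧
      F ^ 3 = G ^ 2 + h ^ 2 := by
  rintro ⟨F, G, h, -, hF, -, -, -, hh, hroot, heq⟩
  have hFh : IsCoprime F h :=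
    (isCoprime_iff_aeval_ne_zero_of_isAlgClosed ℂ (k := ℂ) F h).mpr fun z => by
      simpa using not_and_or.mp (hroot z)
  have := natDegree_le_natDegree_of_pow_three_eq_sq_add_sq two_ne_zero three_ne_zero hFh heq
  omega
end

section
/- There do not exist polynomials A, B, h ∈ ℂ[X] such that: A is squarefree of degree 4; B is squarefree of degree 3; h is squarefree of degree 3; A and h have no common complex root; and A² = B³ + h³. (Equivalently, there is no Belyi covering of degree 9 with branching pattern 2+2+2+2+1 above 0, [3]³ above 1, and 3+3+3 above ∞ — the nonexistent pattern N₁₆ of the paper.) -/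
/-!
Over a field containing a primitive cube root of unity `ω`, the identity
`B³ + h³ = (B + h)(B + ωh)(B + ω²h)` splits `A²` into three pairwise coprime factors when `B` and
`h` are coprime. Each factor is then a unit times a square, so has even degree; being of degree at
most `3`, each has degree at most `2`, which forces `deg A ≤ 3`.
-/

open Polynomial

theorem IsCoprime.add_mul_add_mul {R : Type*} [CommRing R] {x y : R} (h : IsCoprime x y)
    {c d : R} (hcd : IsUnit (d - c)) : IsCoprime (x + c * y) (x + d * y) := by
  have h₁ : IsCoprime (x + c * y) ((d - c) * y) :=
    (isCoprime_mul_unit_left_right hcd _ _).2 (by simpa [mul_comm] using h.add_mul_left_left c)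
  convert h₁.add_mul_left_right 1 using 1
  ring

theorem add_pow_three_eq_mul_of_isPrimitiveRoot {R : Type*} [CommRing R] [IsDomain R] {ω : R}
    (hω : IsPrimitiveRoot ω 3) (x y : R) :
    x ^ 3 + y ^ 3 = (x + y) * ((x + ω * y) * (x + ω ^ 2 * y)) := by
  have h := hω.geom_sum_eq_zero (by norm_num)
  simp only [Finset.sum_range_succ, Finset.sum_range_zero] at h
  linear_combination (-(x ^ 2 * y) - ω * x * y ^ 2 - (ω - 1) * y ^ 3) * h

theorem IsCoprime.of_sq_eq_add_pow_three {R : Type*} [CommRing R] {a x y : R}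
    (hay : IsCoprime a y) (h : a ^ 2 = x ^ 3 + y ^ 3) : IsCoprime x y := by
  have : IsCoprime (a ^ 2 + y * -y ^ 2) y := hay.pow_left.add_mul_left_left _
  rw [h, show x ^ 3 + y ^ 3 + y * -y ^ 2 = x ^ 3 by ring] at this
  exact (IsCoprime.pow_left_iff (by norm_num)).1 this

namespace Polynomial

variable {K : Type*} [Field K]

theorem even_natDegree_of_isCoprime_of_mul_eq_sq {a b c : K[X]} (hab : IsCoprime a b)
    (h : a * b = c ^ 2) : Even a.natDegree := by
  obtain ⟨d, hd⟩ := exists_associated_pow_of_mul_eq_pow' hab h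
  rw [← natDegree_eq_of_degree_eq (degree_eq_degree_of_associated hd), natDegree_pow]
  exact even_two_mul _

theorem natDegree_le_of_add_pow_three_eq_sq {ω : K} (hω : IsPrimitiveRoot ω 3) {x y a : K[X]}
    (hxy : IsCoprime x y) (h : x ^ 3 + y ^ 3 = a ^ 2) {n : ℕ} (hx : x.natDegree ≤ n)
    (hy : y.natDegree ≤ n) : a.natDegree ≤ 3 * (n / 2) := by
  set F : ℕ → K[X] := fun i => x + C (ω ^ i) * y with hF
  have hfac : F 0 * (F 1 * F 2) = a ^ 2 := by
    rw [← h, add_pow_three_eq_mul_of_isPrimitiveRoot (hω.map_of_injective C_injective)]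
    simp [hF]
  have hcop {i j : ℕ} (hi : i < 3) (hj : j < 3) (hij : i ≠ j) : IsCoprime (F i) (F j) := by
    refine hxy.add_mul_add_mul ?_
    rw [← C_sub]
    exact isUnit_C.2 (IsUnit.mk0 _ (sub_ne_zero.2 fun e => hij (hω.pow_inj hj hi e).symm))
  have hle {i j k : ℕ} (hprod : F i * (F j * F k) = a ^ 2) (hi : i < 3 := by decide)
      (hj : j < 3 := by decide) (hk : k < 3 := by decide) (hij : i ≠ j := by decide)
      (hik : i ≠ k := by decide) : (F i).natDegree ≤ 2 * (n / 2) := by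
    obtain ⟨m, hm⟩ := even_natDegree_of_isCoprime_of_mul_eq_sq
      ((hcop hi hj hij).mul_right (hcop hi hk hik)) hprod
    have : (F i).natDegree ≤ n :=
      natDegree_add_le_of_degree_le hx ((natDegree_C_mul_le _ _).trans hy)
    omega
  have h₀ := hle (i := 0) (j := 1) (k := 2) hfac
  have h₁ := hle (i := 1) (j := 0) (k := 2) (by rw [← hfac]; ring)
  have h₂ := hle (i := 2) (j := 0) (k := 1) (by rw [← hfac]; ring)
  calc a.natDegree = (a ^ 2).natDegree / 2 := by rw [natDegree_pow]; omega
    _ ≤ ((F 0).natDegree + ((F 1).natDegree + (F 2).natDegree)) / 2 := by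
      rw [← hfac]
      gcongr
      exact natDegree_mul_le.trans (by gcongr; exact natDegree_mul_le)
    _ ≤ 3 * (n / 2) := by omega

end Polynomial

/-- Nonexistent branching pattern `N₁₆`: there is no Belyi covering of degree 9
with branching pattern `2+2+2+2+1 = [3]³ = 3+3+3`.  Normalized so that the simple
point of the first fiber is at `∞`, such a covering would be `A²/h³` with `A`
squarefree of degree 4, `B` squarefree of degree 3, `h` squarefree of degree 3,
`A` and `h` sharing no complex root, and `A² = B³ + h³`. -/
theorem no_covering_N16 :
    ¬ ∃ (A B h : ℂ[X]),
      Squarefree A ∧ A.natDegree = 4 ∧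
      Squarefree B ∧ B.natDegree = 3 ∧
      Squarefree h ∧ h.natDegree = 3 ∧
      (∀ z : ℂ, ¬(A.IsRoot z ∧ h.IsRoot z)) ∧
      A ^ 2 = B ^ 3 + h ^ 3 := by
  rintro ⟨A, B, h, -, hA, -, hB, -, hh, hroot, heq⟩
  have hAh : IsCoprime A h :=
    (isCoprime_iff_aeval_ne_zero_of_isAlgClosed ℂ ℂ A h).2 fun z => by
      simpa using not_and_or.1 (hroot z)
  have := natDegree_le_of_add_pow_three_eq_sq (Complex.isPrimitiveRoot_exp 3 (by norm_num))
    (hAh.of_sq_eq_add_pow_three heq) heq.symm hB.le hh.le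
  omega
end

section
/- There do not exist polynomials u, G ∈ ℂ[X], complex numbers a, b, d, and a nonzero complex number λ such that: u is squarefree of degree 2; G is squarefree of degree 4; a, b, d are pairwise distinct; u(a) ≠ 0, u(b) ≠ 0, u(d) ≠ 0; and u⁴ − λ·(X − a)(X − b)(X − d) = G². (Equivalently, there is no Belyi covering of degree 8 with branching pattern [4]² above 0, [2]⁴ above 1, and 5+1+1+1 above ∞ — the nonexistent pattern N₂₁ of the paper.) -/
/-!
If `u⁴ − λ(X − a)(X − b)(X − d) = G²`, then `(u² − G)(u² + G)` is a nonzero cubic.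
But the two factors add up to `2u²`, of degree 4, so one of them already has degree
at least 4.
-/

open Polynomial

theorem Polynomial.natDegree_le_natDegree_sq_sub_sq {R : Type*} [CommRing R] [IsDomain R]
    [NeZero (2 : R)] {f g : R[X]} (h : f ^ 2 - g ^ 2 ≠ 0) :
    f.natDegree ≤ (f ^ 2 - g ^ 2).natDegree := by
  have hfactor : f ^ 2 - g ^ 2 = (f - g) * (f + g) := by ring
  rw [hfactor] at h ⊢
  obtain ⟨hsub, hadd⟩ := mul_ne_zero_iff.mp h
  rw [natDegree_mul hsub hadd]
  calc f.natDegree = (C 2 * f).natDegree := (natDegree_C_mul (NeZero.ne (2 : R))).symm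
    _ = ((f - g) + (f + g)).natDegree := by congr 1; rw [C_ofNat]; ring
    _ ≤ max (f - g).natDegree (f + g).natDegree := natDegree_add_le _ _
    _ ≤ (f - g).natDegree + (f + g).natDegree :=
      max_le_add_of_nonneg (Nat.zero_le _) (Nat.zero_le _)

/-- Nonexistent branching pattern `N₂₁`: there is no Belyi covering of degree 8
with branching pattern `[4]² = [2]⁴ = 5+1+1+1`.  Normalized so that the point of
ramification order 5 is at `∞`, such a covering would be
`λ⁻¹·u⁴/((X−a)(X−b)(X−d))` with `u` squarefree of degree 2, `G` squarefree of
degree 4, and `a, b, d` distinct points not roots of `u`. -/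
theorem no_covering_N21 :
    ¬ ∃ (u G : ℂ[X]) (a b d l : ℂ), l ≠ 0 ∧
      Squarefree u ∧ u.natDegree = 2 ∧
      Squarefree G ∧ G.natDegree = 4 ∧
      a ≠ b ∧ a ≠ d ∧ b ≠ d ∧
      u.eval a ≠ 0 ∧ u.eval b ≠ 0 ∧ u.eval d ≠ 0 ∧
      u ^ 4 - C l * ((X - C a) * (X - C b) * (X - C d)) = G ^ 2 := by
  rintro ⟨u, G, a, b, d, l, hl, -, hu, -, -, -, -, -, -, -, -, heq⟩
  have hcubic : (u ^ 2) ^ 2 - G ^ 2 = C l * ((X - C a) * (X - C b) * (X - C d)) := by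
    linear_combination heq
  have hne : C l * ((X - C a) * (X - C b) * (X - C d)) ≠ 0 := by
    simp [hl, X_sub_C_ne_zero]
  have hdeg : (C l * ((X - C a) * (X - C b) * (X - C d))).natDegree ≤ 3 := by
    compute_degree
  have hsq := natDegree_le_natDegree_sq_sub_sq (hcubic ▸ hne)
  rw [hcubic, natDegree_pow, hu] at hsq
  omega
end

section
/- There do not exist polynomials u, v ∈ ℂ[X], complex numbers a, b, d, and a nonzero complex number λ such that: u and v are squarefree of degree 2; a, b, d are pairwise distinct; u(a) ≠ 0, u(b) ≠ 0, u(d) ≠ 0; and u³ − λ·(X − a)(X − b)(X − d) = v³. (Equivalently, there is no Belyi covering of degree 6 with branching pattern [3]² above 0, [3]² above 1, and 3+1+1+1 above ∞ — the nonexistent pattern N₂₆ of the paper.) -/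
/-!
If `ζ` is a primitive `n`-th root of unity, then `u ^ n - v ^ n = ∏ (u - ζ^i v)`. The
coefficient of `X ^ deg v` in `u - c v` vanishes for at most one constant `c`, so all but at
most one of the `n` factors have degree at least `deg v`, and
`deg (u ^ n - v ^ n) ≥ (n - 1) deg v` unless the difference vanishes. For `n = 3` and
`deg v = 2` this forces `deg (u ^ 3 - v ^ 3) ≥ 4`, whereas a covering
of pattern `N₂₆` would make it a cubic.
-/

open Polynomial Finset

namespace Polynomial

variable {K : Type*} [Field K]

theorem natDegree_le_natDegree_sub_C_mul {u v : K[X]} {c : K}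
    (hc : c ≠ u.coeff v.natDegree / v.leadingCoeff) :
    v.natDegree ≤ (u - C c * v).natDegree := by
  rcases eq_or_ne v 0 with rfl | hv
  · simp
  refine le_natDegree_of_ne_zero fun h ↦ hc ?_
  rw [coeff_sub, coeff_C_mul, coeff_natDegree, sub_eq_zero] at h
  rw [h, mul_div_cancel_right₀ _ (leadingCoeff_ne_zero.mpr hv)]

theorem eq_C_of_mem_nthRootsFinset_one {n : ℕ} (hn : 0 < n) {w : K[X]}
    (hw : w ∈ nthRootsFinset n (1 : K[X])) : ∃ c : K, w = C c := by
  obtain ⟨c, -, rfl⟩ :=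
    isUnit_iff.mp (IsUnit.of_pow_eq_one ((mem_nthRootsFinset hn 1).mp hw) hn.ne')
  exact ⟨c, rfl⟩

theorem _root_.IsPrimitiveRoot.mul_natDegree_le_natDegree_pow_sub_pow {ζ : K} {n : ℕ}
    (hζ : IsPrimitiveRoot ζ n) {u v : K[X]} (h : u ^ n - v ^ n ≠ 0) :
    (n - 1) * v.natDegree ≤ (u ^ n - v ^ n).natDegree := by
  classical
  rcases Nat.eq_zero_or_pos n with rfl | hn
  · simp
  have hζC : IsPrimitiveRoot (C ζ) n := hζ.map_of_injective C_injective
  rw [hζC.pow_sub_pow_eq_prod_sub_mul u v hn] at h ⊢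
  set S := nthRootsFinset n (1 : K[X])
  let w₀ : K[X] := C (u.coeff v.natDegree / v.leadingCoeff)
  have hfactor : ∀ w ∈ S.erase w₀, v.natDegree ≤ (u - w * v).natDegree := by
    intro w hw
    obtain ⟨hne, hwS⟩ := mem_erase.mp hw
    obtain ⟨c, rfl⟩ := eq_C_of_mem_nthRootsFinset_one hn hwS
    exact natDegree_le_natDegree_sub_C_mul fun hc ↦ hne (congrArg C hc)
  calc (n - 1) * v.natDegree
      = (S.card - 1) * v.natDegree := by rw [hζC.card_nthRootsFinset]
    _ ≤ (S.erase w₀).card • v.natDegree := Nat.mul_le_mul_right _ pred_card_le_card_erase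
    _ ≤ ∑ w ∈ S.erase w₀, (u - w * v).natDegree := card_nsmul_le_sum _ _ _ hfactor
    _ ≤ ∑ w ∈ S, (u - w * v).natDegree := sum_le_sum_of_subset (erase_subset _ _)
    _ = (∏ w ∈ S, (u - w * v)).natDegree := (natDegree_prod _ _ (prod_ne_zero_iff.mp h)).symm

end Polynomial

/-- Nonexistent branching pattern `N₂₆`: there is no Belyi covering of degree 6
with branching pattern `[3]² = [3]² = 3+1+1+1`.  Normalized so that the point of
ramification order 3 of the last fiber is at `∞`, such a covering would be
`λ⁻¹·u³/((X−a)(X−b)(X−d))` with `u, v` squarefree of degree 2 and `a, b, d`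
distinct points not roots of `u`. -/
theorem no_covering_N26 :
    ¬ ∃ (u v : ℂ[X]) (a b d l : ℂ), l ≠ 0 ∧
      Squarefree u ∧ u.natDegree = 2 ∧
      Squarefree v ∧ v.natDegree = 2 ∧
      a ≠ b ∧ a ≠ d ∧ b ≠ d ∧
      u.eval a ≠ 0 ∧ u.eval b ≠ 0 ∧ u.eval d ≠ 0 ∧
      u ^ 3 - C l * ((X - C a) * (X - C b) * (X - C d)) = v ^ 3 := by
  rintro ⟨u, v, a, b, d, l, hl, -, -, -, hv, -, -, -, -, -, -, heq⟩
  have hdiff : u ^ 3 - v ^ 3 = C l * ((X - C a) * (X - C b) * (X - C d)) := by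
    rw [← heq]; ring
  have hcubic : (u ^ 3 - v ^ 3).natDegree = 3 := by
    rw [hdiff, natDegree_C_mul hl]
    simp [natDegree_mul, X_sub_C_ne_zero]
  have hbound :=
    (Complex.isPrimitiveRoot_exp 3 three_ne_zero).mul_natDegree_le_natDegree_pow_sub_pow
      (u := u) (v := v) (by rintro h; simp [h] at hcubic)
  rw [hcubic, hv] at hbound
  omega
end

section
/- There do not exist a polynomial u ∈ ℂ[X], complex numbers e, r, s, and nonzero complex numbers λ, μ such that: u is squarefree of degree 2; u(e) ≠ 0; r ≠ s; and u² − μ·(X − e)² = λ·(X − r)³(X − s). (Equivalently, there is no Belyi covering of degree 4 with branching pattern 2+2 above 0, 3+1 above 1, and 2+2 above ∞ — the nonexistent pattern N₂₇ of the paper.) -/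
/-!
Write `μ = t²`. Then `u² − μ(X−e)² = (u − t(X−e))(u + t(X−e))`, and the two factors have no
common root: at a common root `r` their difference gives `r = e`, and then `u(e) = 0`. Hence the
triple root `r` of the right-hand side is a triple root of one factor, which is nonzero (it takes
the value `u(e)` at `e`) and of degree at most `2`.
-/

open Polynomial

theorem Prime.pow_dvd_or_pow_dvd_of_dvd_mul {M : Type*} [CommMonoidWithZero M] [IsCancelMulZero M]
    {p a b : M} (hp : Prime p) (n : ℕ) (hab : ¬(p ∣ a ∧ p ∣ b)) (h : p ^ n ∣ a * b) :
    p ^ n ∣ a ∨ p ^ n ∣ b := by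
  by_cases ha : p ∣ a
  · exact .inl (hp.pow_dvd_of_dvd_mul_right n (fun hb ↦ hab ⟨ha, hb⟩) h)
  · exact .inr (hp.pow_dvd_of_dvd_mul_left n ha h)

namespace Polynomial

variable {K : Type*} [Field K]

theorem le_natDegree_of_X_sub_C_pow_dvd {p : K[X]} {r : K} {n : ℕ} (hp : p ≠ 0)
    (h : (X - C r) ^ n ∣ p) : n ≤ p.natDegree := by
  simpa using natDegree_le_of_dvd h hp

theorem sub_C_mul_X_sub_C_ne_zero {u : K[X]} {c e : K} (hue : u.eval e ≠ 0) :
    u - C c * (X - C e) ≠ 0 :=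
  fun h ↦ hue (by simpa using congrArg (eval e) h)

theorem natDegree_sub_C_mul_X_sub_C_le (u : K[X]) (c e : K) :
    (u - C c * (X - C e)).natDegree ≤ max u.natDegree 1 :=
  (natDegree_sub_le _ _).trans <|
    max_le_max le_rfl ((natDegree_C_mul_le c _).trans (natDegree_X_sub_C_le e))

theorem not_X_sub_C_dvd_sub_C_mul_and_sub_C_neg_mul [NeZero (2 : K)] {u : K[X]} {c e : K}
    (hc : c ≠ 0) (hue : u.eval e ≠ 0) (r : K) :
    ¬((X - C r) ∣ u - C c * (X - C e) ∧ (X - C r) ∣ u - C (-c) * (X - C e)) := by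
  rintro ⟨h₁, h₂⟩
  have e₁ := dvd_iff_isRoot.mp h₁
  have e₂ := dvd_iff_isRoot.mp h₂
  simp only [IsRoot, eval_sub, eval_mul, eval_C, eval_X] at e₁ e₂
  have hre : r = e := by
    have : 2 * c * (r - e) = 0 := by linear_combination e₂ - e₁
    simpa [hc, sub_eq_zero, two_ne_zero] using this
  subst hre
  exact hue (by simpa using e₁)

theorem three_le_natDegree_of_X_sub_C_pow_three_dvd [NeZero (2 : K)] {u : K[X]} {c e r : K}
    (hc : c ≠ 0) (hue : u.eval e ≠ 0)
    (h : (X - C r) ^ 3 ∣ u ^ 2 - C (c ^ 2) * (X - C e) ^ 2) : 3 ≤ u.natDegree := by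
  have hfactor : u ^ 2 - C (c ^ 2) * (X - C e) ^ 2 =
      (u - C c * (X - C e)) * (u - C (-c) * (X - C e)) := by
    simp only [C_pow, C_neg]; ring
  rw [hfactor] at h
  rcases (prime_X_sub_C r).pow_dvd_or_pow_dvd_of_dvd_mul 3
      (not_X_sub_C_dvd_sub_C_mul_and_sub_C_neg_mul hc hue r) h with h | h <;>
  · have := (le_natDegree_of_X_sub_C_pow_dvd (sub_C_mul_X_sub_C_ne_zero hue) h).trans
      (natDegree_sub_C_mul_X_sub_C_le u _ e)
    omega

end Polynomial

/-- Nonexistent branching pattern `N₂₇` (the only unrealizable pattern of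
Table 1): there is no Belyi covering of degree 4 with branching pattern
`2+2 = 3+1 = 2+2`.  Normalized so that one point of ramification order 2 of the
fiber above `∞` is at `x = ∞`, such a covering would be `u²/(μ(X−e)²)` with `u`
squarefree of degree 2, `u(e) ≠ 0`, `r ≠ s`, and
`u² − μ(X−e)² = λ(X−r)³(X−s)`. -/
theorem no_covering_N27 :
    ¬ ∃ (u : ℂ[X]) (e r s l m : ℂ), l ≠ 0 ∧ m ≠ 0 ∧
      Squarefree u ∧ u.natDegree = 2 ∧
      u.eval e ≠ 0 ∧ r ≠ s ∧
      u ^ 2 - C m * (X - C e) ^ 2 = C l * ((X - C r) ^ 3 * (X - C s)) := by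
  rintro ⟨u, e, r, s, l, m, -, hm, -, hdeg, hue, -, heq⟩
  obtain ⟨t, rfl⟩ := IsAlgClosed.exists_pow_nat_eq m two_pos
  have ht : t ≠ 0 := by rintro rfl; simp at hm
  have hdvd : (X - C r) ^ 3 ∣ u ^ 2 - C (t ^ 2) * (X - C e) ^ 2 :=
    heq ▸ ⟨C l * (X - C s), by ring⟩
  have := three_le_natDegree_of_X_sub_C_pow_three_dvd ht hue hdvd
  omega
end

section
/- There do not exist a polynomial G ∈ ℂ[X], complex numbers p, q, a, b, and a nonzero complex number λ such that: G is squarefree of degree 3; p ≠ q; a ≠ b; p ∉ {a, b} and q ∉ {a, b}; and λ·(X − p)⁴(X − q)² − (X − a)(X − b) = G². (Equivalently, there is no Belyi covering of degree 6 with branching pattern 4+2 above 0, [2]³ above 1, and 4+1+1 above ∞ — the nonexistent pattern N₂₃ of the paper.) -/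
/-!
Writing `λ = μ²` and `F = (X - p)²(X - q)`, the equation reads
`(μF - G)(μF + G) = (X - a)(X - b)`. The two factors then have degrees adding up to `2`,
while their sum `2μF` has degree `3`, which is impossible.
-/

open Polynomial

namespace Polynomial

variable {R : Type*} [CommRing R] [IsDomain R]

theorem natDegree_add_le_natDegree_mul {A B : R[X]} (h : A * B ≠ 0) :
    (A + B).natDegree ≤ (A * B).natDegree := by
  rw [natDegree_mul (left_ne_zero_of_mul h) (right_ne_zero_of_mul h)]
  exact (natDegree_add_le A B).trans (max_le_add_of_nonneg (Nat.zero_le _) (Nat.zero_le _))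

theorem natDegree_le_of_C_mul_sq_sub_sq_eq [NeZero (2 : R)] {c : R} (hc : c ≠ 0)
    {F G H : R[X]} (hH : H ≠ 0) (h : C c ^ 2 * F ^ 2 - G ^ 2 = H) :
    F.natDegree ≤ H.natDegree := by
  have hprod : (C c * F - G) * (C c * F + G) = H := by rw [← h]; ring
  have hsum : (C c * F - G) + (C c * F + G) = C (2 * c) * F := by
    rw [C_mul, C_ofNat]; ring
  have hdeg := natDegree_add_le_natDegree_mul (hprod ▸ hH)
  rwa [hsum, hprod, natDegree_C_mul (mul_ne_zero two_ne_zero hc)] at hdeg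

end Polynomial

/-- Nonexistent branching pattern `N₂₃`: there is no Belyi covering of degree 6
with branching pattern `4+2 = [2]³ = 4+1+1`.  Normalized so that the point of
ramification order 4 of the fiber `4+1+1` is at `∞`, such a covering would be
`λ(X−p)⁴(X−q)²/((X−a)(X−b))` with `G` squarefree of degree 3, `p ≠ q`, `a ≠ b`,
and `p, q ∉ {a, b}`. -/
theorem no_covering_N23 :
    ¬ ∃ (G : ℂ[X]) (p q a b l : ℂ), l ≠ 0 ∧
      Squarefree G ∧ G.natDegree = 3 ∧
      p ≠ q ∧ a ≠ b ∧
      p ≠ a ∧ p ≠ b ∧ q ≠ a ∧ q ≠ b ∧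
      C l * ((X - C p) ^ 4 * (X - C q) ^ 2) - (X - C a) * (X - C b) = G ^ 2 := by
  rintro ⟨G, p, q, a, b, l, hl, -, -, -, -, -, -, -, -, heq⟩
  obtain ⟨μ, rfl⟩ := IsAlgClosed.exists_pow_nat_eq l two_pos
  have hsq : C μ ^ 2 * ((X - C p) ^ 2 * (X - C q)) ^ 2 - G ^ 2 = (X - C a) * (X - C b) := by
    rw [← heq, C_pow]; ring
  have hle := natDegree_le_of_C_mul_sq_sub_sq_eq (pow_ne_zero_iff two_ne_zero |>.mp hl)
    (mul_ne_zero (X_sub_C_ne_zero a) (X_sub_C_ne_zero b)) hsq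
  rw [natDegree_mul (pow_ne_zero 2 (X_sub_C_ne_zero p)) (X_sub_C_ne_zero q),
    natDegree_mul (X_sub_C_ne_zero a) (X_sub_C_ne_zero b), natDegree_pow] at hle
  simp only [natDegree_X_sub_C] at hle
  omega
end
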